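/- Let v : Ω → ℝ be smooth. Then v satisfies v₂₄ − v₃₃ = v₃·v₁₄ − v₄·v₁₃ identically on Ω if and only if for every λ ∈ ℝ the vector fields X = ∂₂ − (λ·v₄ + v₃)·∂₁ − λ²·∂₄ and Y = ∂₃ − v₄·∂₁ − λ·∂₄ on Ω commute: [X, Y] = 0. -/

import Mathlib

/-! Both directions come from one computation: for smooth `v`, the bracket `[X, Y]` has a single
nonzero component, along `∂₁`, and by the symmetry of second derivatives all its terms containing
`λ` cancel, leaving `v₃v₁₄ − v₄v₁₃ − (v₂₄ − v₃₃)`. -/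

/-- Partial derivative of `F : ℝ⁴ → ℝ` in the `i`-th coordinate direction. -/
noncomputable def pd (i : Fin 4) (F : (Fin 4 → ℝ) → ℝ) : (Fin 4 → ℝ) → ℝ :=
  fun x => fderiv ℝ F x (Pi.single i 1)

/-- Lie bracket of two vector fields on ℝ⁴, given by their component functions:
`[X, Y]ⁱ = Σⱼ (Xʲ ∂ⱼYⁱ − Yʲ ∂ⱼXⁱ)`. -/
noncomputable def lieB (X Y : (Fin 4 → ℝ) → (Fin 4 → ℝ)) : (Fin 4 → ℝ) → (Fin 4 → ℝ) :=
  fun x i => ∑ j : Fin 4, (X x j * pd j (fun y => Y y i) x - Y x j * pd j (fun y => X y i) x)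

section PartialDerivatives

variable {f g : (Fin 4 → ℝ) → ℝ} {x : Fin 4 → ℝ}

@[simp]
lemma pd_const (i : Fin 4) (c : ℝ) : pd i (fun _ => c) = 0 := by
  funext x
  simp [pd]

lemma pd_neg (i : Fin 4) (f : (Fin 4 → ℝ) → ℝ) : pd i (fun y => -f y) = fun x => -pd i f x := by
  funext x
  simp [pd, fderiv_fun_neg]

lemma pd_const_mul (i : Fin 4) (c : ℝ) (f : (Fin 4 → ℝ) → ℝ) :
    pd i (fun y => c * f y) = fun x => c * pd i f x := by
  funext x
  simp [pd, ← smul_eq_mul, ← Pi.smul_def, fderiv_const_smul_field]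

lemma pd_add (i : Fin 4) (hf : DifferentiableAt ℝ f x) (hg : DifferentiableAt ℝ g x) :
    pd i (fun y => f y + g y) x = pd i f x + pd i g x := by
  simp [pd, fderiv_fun_add hf hg]

lemma pd_pd_eq_fderiv_fderiv (hf : DifferentiableAt ℝ (fderiv ℝ f) x) (i j : Fin 4) :
    pd i (pd j f) x = fderiv ℝ (fderiv ℝ f) x (Pi.single i 1) (Pi.single j 1) := by
  change fderiv ℝ (fun y => fderiv ℝ f y (Pi.single j 1)) x (Pi.single i 1) = _
  simp [fderiv_clm_apply hf (differentiableAt_const _)]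

lemma ContDiffAt.differentiableAt_fderiv (hf : ContDiffAt ℝ 2 f x) :
    DifferentiableAt ℝ (fderiv ℝ f) x :=
  (hf.fderiv_right (m := 1) le_rfl).differentiableAt one_ne_zero

lemma ContDiffAt.differentiableAt_pd (hf : ContDiffAt ℝ 2 f x) (j : Fin 4) :
    DifferentiableAt ℝ (pd j f) x :=
  hf.differentiableAt_fderiv.clm_apply (differentiableAt_const _)

lemma ContDiffAt.pd_pd_comm (hf : ContDiffAt ℝ 2 f x) (i j : Fin 4) :
    pd i (pd j f) x = pd j (pd i f) x := by
  rw [pd_pd_eq_fderiv_fderiv hf.differentiableAt_fderiv,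
    pd_pd_eq_fderiv_fderiv hf.differentiableAt_fderiv, hf.isSymmSndFDerivAt (by simp)]

end PartialDerivatives

lemma lieB_apply_eq_zero_of_const {X Y : (Fin 4 → ℝ) → (Fin 4 → ℝ)} {i : Fin 4} {a b : ℝ}
    (hX : ∀ y, X y i = a) (hY : ∀ y, Y y i = b) (x : Fin 4 → ℝ) : lieB X Y x i = 0 := by
  simp [lieB, funext hX, funext hY]

theorem lieB_laxPair {v : (Fin 4 → ℝ) → ℝ} {x : Fin 4 → ℝ} (hv : ContDiffAt ℝ 2 v x) (lam : ℝ) :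
    lieB (fun y => ![-(lam * pd 3 v y + pd 2 v y), 1, 0, -lam ^ 2])
        (fun y => ![-(pd 3 v y), 0, 1, -lam]) x
      = ![pd 2 v x * pd 3 (pd 0 v) x - pd 3 v x * pd 2 (pd 0 v) x
            - (pd 3 (pd 1 v) x - pd 2 (pd 2 v) x), 0, 0, 0] := by
  ext i
  fin_cases i
  · have hsum (j : Fin 4) := pd_add j ((hv.differentiableAt_pd 3).const_mul lam)
      (hv.differentiableAt_pd 2)
    simp only [lieB, Fin.sum_univ_four, Fin.zero_eta, Matrix.cons_val_zero, Matrix.cons_val_one,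
      Matrix.cons_val_two, Matrix.cons_val_three, Matrix.head_cons, Matrix.tail_cons]
    simp only [pd_neg, hsum, pd_const_mul]
    rw [hv.pd_pd_comm 1 3, hv.pd_pd_comm 0 3, hv.pd_pd_comm 0 2, hv.pd_pd_comm 3 2]
    ring
  all_goals exact lieB_apply_eq_zero_of_const (fun _ => rfl) (fun _ => rfl) x

/-- `v` satisfies `v₂₄ − v₃₃ = v₃v₁₄ − v₄v₁₃` on `Ω` iff for every `λ` the vector fields
`X = ∂₂ − (λv₄ + v₃)∂₁ − λ²∂₄` and `Y = ∂₃ − v₄∂₁ − λ∂₄` commute on `Ω`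
(dispersionless Lax pair of the Segre type [3] system).
Coordinates `x¹,…,x⁴` are indexed by `0,…,3`. -/
theorem statement12 (Ω : Set (Fin 4 → ℝ)) (hΩ : IsOpen Ω)
    (v : (Fin 4 → ℝ) → ℝ) (hv : ContDiffOn ℝ (⊤ : ℕ∞) v Ω) :
    (∀ x ∈ Ω,
        pd 3 (pd 1 v) x - pd 2 (pd 2 v) x
          = pd 2 v x * pd 3 (pd 0 v) x - pd 3 v x * pd 2 (pd 0 v) x) ↔
    (∀ lam : ℝ, ∀ x ∈ Ω,
        lieB (fun y => ![-(lam * pd 3 v y + pd 2 v y), 1, 0, -lam ^ 2])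
             (fun y => ![-(pd 3 v y), 0, 1, -lam]) x = 0) := by
  have hv₂ : ∀ x ∈ Ω, ContDiffAt ℝ 2 v x := fun x hx =>
    (hv.contDiffAt (hΩ.mem_nhds hx)).of_le (WithTop.coe_le_coe.mpr (le_top (a := (2 : ℕ∞))))
  constructor
  · intro hpde lam x hx
    rw [lieB_laxPair (hv₂ x hx), hpde x hx, sub_self]
    simp
  · intro hcomm x hx
    have h := congrFun ((lieB_laxPair (hv₂ x hx) 0).symm.trans (hcomm 0 x hx)) 0
    simp only [Matrix.cons_val_zero, Pi.zero_apply] at h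
    linarith
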